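/- arXiv:1004.3336 — 2 statements merged into one kernel-verified Lean document; each statement's English description precedes it below -/
import Mathlib

section
/- Let E be a valuation (order function) ord_E on a ring A with values in the nonnegative reals, satisfying ord_E(uv) = ord_E(u) + ord_E(v) and ord_E(u+v) ≥ min(ord_E(u), ord_E(v)). Let a_1,...,a_r and b_1,...,b_r be ideals of A such that a_i + p_i = b_i + p_i for all i, where p_i = {u ∈ A : ord_E(u) > ord_E(a_i)} and ord_E(a_i) denotes the infimum of ord_E over a_i. Then for all positive integers ℓ_1,...,ℓ_r one has ∏_i b_i^{ℓ_i} + J = ∏_i a_i^{ℓ_i} + J, where J = {f ∈ A : ord_E(f) > Σ_i ℓ_i · ord_E(a_i)}. -/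
open scoped ENNReal NNReal

/-! The hypotheses make `ord` an additive valuation `v`, and the levels `ord(a i)` are finite
because `0 ∈ p i`. Write `v≥μ` and `v>μ` for the ideals of elements of order `≥ μ`, resp. `> μ`.
Then `b i ⊆ a i + v>μᵢ` with `a i ⊆ v≥μᵢ`, and such congruences multiply:
`(d + v>μ)(d' + v>μ') ⊆ dd' + v>(μ+μ')`, since each cross term has one factor of order `≥` its
level and the other of order `>` its level. Induction over the factors of `∏ b i ^ ℓ i` gives
one inclusion; the other is symmetric, as `b i ⊆ v≥μᵢ` too. -/

-- `ord 0 = ord 0 + ord y` forces `ord 0 = ⊤`, and `ord x = ord x + ord 1` forces `ord 1 = 0`.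
lemma exists_addValuation_eq_of_lt {A : Type*} [CommRing A] {ord : A → ℝ≥0∞}
    (hmul : ∀ u v : A, ord (u * v) = ord u + ord v)
    (hadd : ∀ u v : A, min (ord u) (ord v) ≤ ord (u + v)) {x y : A} (hxy : ord x < ord y) :
    ∃ v : AddValuation A ℝ≥0∞, ⇑v = ord := by
  have h0 : ord 0 = ⊤ := by
    by_contra h
    have := ENNReal.lt_add_right h (pos_of_gt hxy).ne'
    rw [← hmul, zero_mul] at this
    exact this.false
  have h1 : ord 1 = 0 := by
    have hx : ord x ≠ ⊤ := hxy.ne_top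
    have : ord x + ord 1 = ord x + 0 := by rw [← hmul, mul_one, add_zero]
    exact (ENNReal.add_right_inj hx).1 this
  exact ⟨AddValuation.of ord h0 h1 hadd hmul, rfl⟩

namespace AddValuation

variable {A : Type*} [CommRing A] (v : AddValuation A ℝ≥0∞)

def geIdeal (μ : ℝ≥0) : Ideal A where
  carrier := {x | μ ≤ v x}
  zero_mem' := by simp
  add_mem' {x y} hx hy := (le_min hx hy).trans (v.map_add x y)
  smul_mem' c x hx := by
    show (μ : ℝ≥0∞) ≤ v (c * x)
    exact v.map_mul c x ▸ hx.trans le_add_self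

-- The level is taken in `ℝ≥0` because `{x | ⊤ < v x}` does not contain `0`.
def gtIdeal (μ : ℝ≥0) : Ideal A where
  carrier := {x | μ < v x}
  zero_mem' := by simp
  add_mem' {x y} hx hy := (lt_min hx hy).trans_le (v.map_add x y)
  smul_mem' c x hx := by
    show (μ : ℝ≥0∞) < v (c * x)
    exact v.map_mul c x ▸ hx.trans_le le_add_self

variable {v}

@[simp]
lemma mem_geIdeal {μ : ℝ≥0} {x : A} : x ∈ v.geIdeal μ ↔ (μ : ℝ≥0∞) ≤ v x := Iff.rfl

@[simp]
lemma mem_gtIdeal {μ : ℝ≥0} {x : A} : x ∈ v.gtIdeal μ ↔ (μ : ℝ≥0∞) < v x := Iff.rfl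

lemma gtIdeal_le_geIdeal (μ : ℝ≥0) : v.gtIdeal μ ≤ v.geIdeal μ := fun _ hx => (mem_gtIdeal.1 hx).le

lemma geIdeal_zero : v.geIdeal 0 = ⊤ := eq_top_iff.2 fun x _ => by simp

lemma geIdeal_mul_le (μ κ : ℝ≥0) : v.geIdeal μ * v.geIdeal κ ≤ v.geIdeal (μ + κ) :=
  Ideal.mul_le.2 fun x hx y hy => by
    rw [mem_geIdeal, v.map_mul, ENNReal.coe_add]
    exact add_le_add hx hy

lemma geIdeal_mul_gtIdeal_le (μ κ : ℝ≥0) : v.geIdeal μ * v.gtIdeal κ ≤ v.gtIdeal (μ + κ) :=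
  Ideal.mul_le.2 fun x hx y hy => by
    rw [mem_gtIdeal, v.map_mul, ENNReal.coe_add]
    exact ENNReal.add_lt_add_of_le_of_lt ENNReal.coe_ne_top hx hy

lemma gtIdeal_mul_geIdeal_le (μ κ : ℝ≥0) : v.gtIdeal μ * v.geIdeal κ ≤ v.gtIdeal (μ + κ) := by
  rw [mul_comm, add_comm]
  exact geIdeal_mul_gtIdeal_le κ μ

lemma mul_le_mul_sup_gtIdeal {c d c' d' : Ideal A} {μ μ' : ℝ≥0}
    (hc : c ≤ d ⊔ v.gtIdeal μ) (hd : d ≤ v.geIdeal μ)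
    (hc' : c' ≤ d' ⊔ v.gtIdeal μ') (hd' : d' ≤ v.geIdeal μ') :
    c * c' ≤ d * d' ⊔ v.gtIdeal (μ + μ') := by
  have hdG : d * v.gtIdeal μ' ≤ v.gtIdeal (μ + μ') :=
    (Ideal.mul_mono_left hd).trans (geIdeal_mul_gtIdeal_le μ μ')
  have hGd : v.gtIdeal μ * d' ≤ v.gtIdeal (μ + μ') :=
    (Ideal.mul_mono_right hd').trans (gtIdeal_mul_geIdeal_le μ μ')
  have hGG : v.gtIdeal μ * v.gtIdeal μ' ≤ v.gtIdeal (μ + μ') :=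
    (Ideal.mul_mono_right (gtIdeal_le_geIdeal μ')).trans (gtIdeal_mul_geIdeal_le μ μ')
  calc c * c' ≤ (d ⊔ v.gtIdeal μ) * (d' ⊔ v.gtIdeal μ') := Ideal.mul_mono hc hc'
    _ = d * d' ⊔ v.gtIdeal μ * d' ⊔ (d * v.gtIdeal μ' ⊔ v.gtIdeal μ * v.gtIdeal μ') := by
      simp only [Ideal.mul_sup, Ideal.sup_mul]
    _ ≤ d * d' ⊔ v.gtIdeal (μ + μ') :=
      sup_le (sup_le_sup_left hGd _) (sup_le (hdG.trans le_sup_right) (hGG.trans le_sup_right))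

variable {ι : Type*}

lemma prod_le_geIdeal (s : Finset ι) {d : ι → Ideal A} {μ : ι → ℝ≥0}
    (hd : ∀ i ∈ s, d i ≤ v.geIdeal (μ i)) :
    ∏ i ∈ s, d i ≤ v.geIdeal (∑ i ∈ s, μ i) := by
  classical
  induction s using Finset.induction_on with
  | empty => simp [geIdeal_zero]
  | insert j s hj ih =>
    rw [Finset.prod_insert hj, Finset.sum_insert hj]
    refine (Ideal.mul_mono (hd j (s.mem_insert_self j)) ?_).trans (geIdeal_mul_le _ _)
    exact ih fun i hi => hd i (Finset.mem_insert_of_mem hi)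

lemma prod_le_prod_sup_gtIdeal (s : Finset ι) {c d : ι → Ideal A} {μ : ι → ℝ≥0}
    (hc : ∀ i ∈ s, c i ≤ d i ⊔ v.gtIdeal (μ i)) (hd : ∀ i ∈ s, d i ≤ v.geIdeal (μ i)) :
    ∏ i ∈ s, c i ≤ (∏ i ∈ s, d i) ⊔ v.gtIdeal (∑ i ∈ s, μ i) := by
  classical
  induction s using Finset.induction_on with
  | empty => simp
  | insert j s hj ih =>
    rw [Finset.prod_insert hj, Finset.prod_insert hj, Finset.sum_insert hj]
    have hs : ∀ i ∈ s, i ∈ insert j s := fun i hi => Finset.mem_insert_of_mem hi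
    exact mul_le_mul_sup_gtIdeal (hc j (s.mem_insert_self j)) (hd j (s.mem_insert_self j))
      (ih (fun i hi => hc i (hs i hi)) fun i hi => hd i (hs i hi))
      (prod_le_geIdeal s fun i hi => hd i (hs i hi))

lemma pow_le_geIdeal {d : Ideal A} {μ : ℝ≥0} (hd : d ≤ v.geIdeal μ) (n : ℕ) :
    d ^ n ≤ v.geIdeal (n * μ) := by
  simpa using prod_le_geIdeal (Finset.range n) fun _ _ => hd

lemma pow_le_pow_sup_gtIdeal {c d : Ideal A} {μ : ℝ≥0}
    (hc : c ≤ d ⊔ v.gtIdeal μ) (hd : d ≤ v.geIdeal μ) (n : ℕ) :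
    c ^ n ≤ d ^ n ⊔ v.gtIdeal (n * μ) := by
  simpa using prod_le_prod_sup_gtIdeal (Finset.range n) (fun _ _ => hc) fun _ _ => hd

lemma prod_pow_sup_gtIdeal_eq (s : Finset ι) {a b : ι → Ideal A} {μ : ι → ℝ≥0} (ℓ : ι → ℕ)
    (hab : ∀ i ∈ s, a i ⊔ v.gtIdeal (μ i) = b i ⊔ v.gtIdeal (μ i))
    (ha : ∀ i ∈ s, a i ≤ v.geIdeal (μ i)) :
    (∏ i ∈ s, a i ^ ℓ i) ⊔ v.gtIdeal (∑ i ∈ s, ℓ i * μ i) =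
      (∏ i ∈ s, b i ^ ℓ i) ⊔ v.gtIdeal (∑ i ∈ s, ℓ i * μ i) := by
  have hb : ∀ i ∈ s, b i ≤ v.geIdeal (μ i) := fun i hi =>
    le_sup_left.trans <| (hab i hi).symm ▸ sup_le (ha i hi) (gtIdeal_le_geIdeal (μ i))
  refine sup_eq_sup_iff_right.2 ⟨?_, ?_⟩
  · refine prod_le_prod_sup_gtIdeal s (fun i hi => ?_) fun i hi => pow_le_geIdeal (hb i hi) _
    exact pow_le_pow_sup_gtIdeal (sup_eq_sup_iff_right.1 (hab i hi)).1 (hb i hi) _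
  · refine prod_le_prod_sup_gtIdeal s (fun i hi => ?_) fun i hi => pow_le_geIdeal (ha i hi) _
    exact pow_le_pow_sup_gtIdeal (sup_eq_sup_iff_right.1 (hab i hi)).2 (ha i hi) _

end AddValuation

theorem stmt_0_general {A : Type*} [CommRing A] (ord : A → ℝ≥0∞)
    (hmul : ∀ u v : A, ord (u * v) = ord u + ord v)
    (hadd : ∀ u v : A, min (ord u) (ord v) ≤ ord (u + v))
    (r : ℕ) (a b p : Fin r → Ideal A) (J : Ideal A) (ℓ : Fin r → ℕ)
    (hp : ∀ i, (p i : Set A) = {u : A | sInf (ord '' ((a i : Set A))) < ord u})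
    (hab : ∀ i, a i + p i = b i + p i)
    (hJ : (J : Set A) = {f : A | ∑ i, (ℓ i : ℝ≥0∞) * sInf (ord '' ((a i : Set A))) < ord f}) :
    (∏ i, b i ^ ℓ i) + J = (∏ i, a i ^ ℓ i) + J := by
  rcases Nat.eq_zero_or_pos r with rfl | hr
  · simp
  set ν : Fin r → ℝ≥0∞ := fun i => sInf (ord '' (a i : Set A))
  have hν : ∀ i, ν i < ord 0 := fun i => by
    have := SetLike.mem_coe.2 (p i).zero_mem
    rwa [hp i] at this
  obtain ⟨_, ⟨x, -, rfl⟩, hx⟩ := sInf_lt_iff.1 (hν ⟨0, hr⟩)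
  obtain ⟨v, rfl⟩ := exists_addValuation_eq_of_lt hmul hadd hx
  have hν_coe : ∀ i, ((ν i).toNNReal : ℝ≥0∞) = ν i := fun i =>
    ENNReal.coe_toNNReal (hν i).ne_top
  have hp' : ∀ i, p i = v.gtIdeal (ν i).toNNReal := fun i =>
    SetLike.coe_injective <| by rw [hp i]; ext; simp [hν_coe, ν]
  have hJ' : J = v.gtIdeal (∑ i, ℓ i * (ν i).toNNReal) :=
    SetLike.coe_injective <| by rw [hJ]; ext; simp [hν_coe, ν]
  have ha : ∀ i, a i ≤ v.geIdeal (ν i).toNNReal := fun i y hy => by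
    simpa [hν_coe] using (sInf_le ⟨y, hy, rfl⟩ : ν i ≤ v y)
  simp only [Submodule.add_eq_sup, hp', hJ'] at hab ⊢
  exact (AddValuation.prod_pow_sup_gtIdeal_eq Finset.univ ℓ (fun i _ => hab i)
    fun i _ => ha i).symm

/-- congruence of products of ideals modulo the "higher order" ideal `J`,
given that each `a i` and `b i` agree modulo `p i = {u | ord u > ord(a i)}`. -/
theorem stmt_0 {A : Type*} [CommRing A] (ord : A → ℝ≥0∞)
    (hmul : ∀ u v : A, ord (u * v) = ord u + ord v)
    (hadd : ∀ u v : A, min (ord u) (ord v) ≤ ord (u + v))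
    (r : ℕ) (a b p : Fin r → Ideal A) (J : Ideal A) (ℓ : Fin r → ℕ) (hℓ : ∀ i, 1 ≤ ℓ i)
    (hp : ∀ i, (p i : Set A) = {u : A | sInf (ord '' ((a i : Set A))) < ord u})
    (hab : ∀ i, a i + p i = b i + p i)
    (hJ : (J : Set A) = {f : A | ∑ i, (ℓ i : ℝ≥0∞) * sInf (ord '' ((a i : Set A))) < ord f}) :
    (∏ i, b i ^ ℓ i) + J = (∏ i, a i ^ ℓ i) + J :=
  stmt_0_general ord hmul hadd r a b p J ℓ hp hab hJ
end

section
/- Let R = k⟦x_1,...,x_n⟧ be a formal power series ring over a field k of characteristic zero, let A be an R-algebra admitting a module of special differentials Ω'_{A/k}, and let B = A/I be a quotient R-algebra. Then Ω'_{B/k} exists and there is an exact sequence of B-modules I/I² → Ω'_{A/k} ⊗_A B → Ω'_{B/k} → 0, where the first map sends f to d'_{A/k}(f) ⊗ 1 and the second sends d'_{A/k}(f) ⊗ 1 to d'_{B/k}(f). -/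
/-- Formal partial derivative of a multivariate power series. -/
noncomputable def pderivPS {k : Type} [Field k] {n : ℕ} (i : Fin n)
    (f : MvPowerSeries (Fin n) k) : MvPowerSeries (Fin n) k :=
  fun m => ((m i + 1 : ℕ) : k) * MvPowerSeries.coeff (m + Finsupp.single i 1) f

/-- A `k`-derivation on an algebra `A` over `R = k⟦x₁,…,xₙ⟧` is *special* if on `R` it
satisfies `D f = ∑ᵢ (∂f/∂xᵢ) • D xᵢ`. -/
def IsSpecial {k : Type} [Field k] {n : ℕ} {A : Type} [CommRing A]
    [Algebra k A] [Algebra (MvPowerSeries (Fin n) k) A]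
    [IsScalarTower k (MvPowerSeries (Fin n) k) A]
    {M : Type} [AddCommGroup M] [Module k M] [Module A M] [IsScalarTower k A M]
    (D : Derivation k A M) : Prop :=
  ∀ f : MvPowerSeries (Fin n) k,
    D (algebraMap (MvPowerSeries (Fin n) k) A f) =
      ∑ i : Fin n, algebraMap (MvPowerSeries (Fin n) k) A (pderivPS i f) •
        D (algebraMap (MvPowerSeries (Fin n) k) A (MvPowerSeries.X i))


/-- A module of special differentials: an `A`-module `Ω` together with a universal
special `k`-derivation `d : A → Ω`. -/
structure SpecialDiff (k : Type) [Field k] (n : ℕ) (A : Type) [CommRing A]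
    [Algebra k A] [Algebra (MvPowerSeries (Fin n) k) A]
    [IsScalarTower k (MvPowerSeries (Fin n) k) A] where
  Ω : Type
  [acg : AddCommGroup Ω]
  [modk : Module k Ω]
  [modA : Module A Ω]
  [tower : IsScalarTower k A Ω]
  d : Derivation k A Ω
  special : IsSpecial (n := n) d
  universal : ∀ (M : Type) [AddCommGroup M] [Module k M] [Module A M]
      [IsScalarTower k A M] (D : Derivation k A M), IsSpecial (n := n) D →
      ∃! φ : Ω →ₗ[A] M, ∀ a : A, φ (d a) = D a

attribute [instance] SpecialDiff.acg SpecialDiff.modk SpecialDiff.modA SpecialDiff.tower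

/-!
With `B = A ⧸ I`, take `Ω'_B := (B ⊗[A] Ω'_A) ⧸ N`, where `N` is the `B`-span of the elements
`1 ⊗ d'x` for `x ∈ I`, and `d'_B (a mod I) := [1 ⊗ d'a]`. A special derivation `D` of `B` pulls
back to a special derivation of `A` vanishing on `I`; it factors through `Ω'_A`, and the base
change of that factorisation kills `N`. Uniqueness reduces to uniqueness for `Ω'_A`, since
`B ⊗[A] Ω'_A` is generated over `B` by `1 ⊗ Ω'_A`. Because `A → B` is surjective, `N` is already
the `A`-linear image of `I/I²`, which is exactness in the middle.
-/

open TensorProduct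

namespace Derivation

variable {R A M : Type*} [CommRing R] [CommRing A] [Algebra R A]
  [AddCommGroup M] [Module A M] [Module R M]

section Quotient

variable {I : Ideal A} [Module (A ⧸ I) M] [IsScalarTower A (A ⧸ I) M]

noncomputable def liftQuotient (D : Derivation R A M) (hD : ∀ x ∈ I, D x = 0) :
    Derivation R (A ⧸ I) M :=
  mk' ((I.restrictScalars R).liftQ D.toLinearMap hD ∘ₗ
      (Submodule.Quotient.restrictScalarsEquiv R I).symm.toLinearMap) fun x y => by
    obtain ⟨a, rfl⟩ := Ideal.Quotient.mk_surjective x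
    obtain ⟨b, rfl⟩ := Ideal.Quotient.mk_surjective y
    rw [← map_mul]
    change D (a * b) = Ideal.Quotient.mk I a • D b + Ideal.Quotient.mk I b • D a
    simp only [← Ideal.Quotient.algebraMap_eq, algebraMap_smul, D.leibniz]

theorem liftQuotient_mk (D : Derivation R A M) (hD : ∀ x ∈ I, D x = 0) (a : A) :
    D.liftQuotient hD (Ideal.Quotient.mk I a) = D a :=
  rfl

end Quotient

variable (D : Derivation R A M) (I : Ideal A)

noncomputable def idealToTensor : I →ₗ[A] (A ⧸ I) ⊗[A] M where
  toFun x := 1 ⊗ₜ D x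
  map_add' x y := by simp only [Submodule.coe_add, map_add, tmul_add]
  map_smul' a x := by
    simp only [SetLike.val_smul, smul_eq_mul, leibniz, tmul_add, tmul_smul, smul_tmul',
      ← Algebra.algebraMap_eq_smul_one, Ideal.Quotient.algebraMap_eq,
      Ideal.Quotient.eq_zero_iff_mem.2 x.2, zero_tmul, add_zero, RingHom.id_apply]

noncomputable def cotangentToTensor : I.Cotangent →ₗ[A] (A ⧸ I) ⊗[A] M :=
  Submodule.liftQ _ (D.idealToTensor I) fun x hx => by
    refine Submodule.smul_induction_on hx (fun a ha y _ => ?_) fun y z hy hz => add_mem hy hz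
    rw [LinearMap.mem_ker, LinearMap.map_smul, ← algebraMap_smul (A ⧸ I),
      Ideal.Quotient.algebraMap_eq, Ideal.Quotient.eq_zero_iff_mem.2 ha, zero_smul]

@[simp]
theorem cotangentToTensor_toCotangent (x : I) :
    D.cotangentToTensor I (I.toCotangent x) = 1 ⊗ₜ D x :=
  rfl

noncomputable def cotangentImage : Submodule (A ⧸ I) ((A ⧸ I) ⊗[A] M) :=
  Submodule.span (A ⧸ I) (Set.range (D.cotangentToTensor I))

theorem coe_cotangentImage :
    (D.cotangentImage I : Set ((A ⧸ I) ⊗[A] M)) = LinearMap.range (D.cotangentToTensor I) := by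
  rw [cotangentImage, ← Submodule.coe_restrictScalars A,
    Submodule.restrictScalars_span A (A ⧸ I) Ideal.Quotient.mk_surjective,
    ← LinearMap.coe_range, Submodule.span_eq]

variable [IsScalarTower R A M]

noncomputable def quotientDerivation :
    Derivation R (A ⧸ I) ((A ⧸ I) ⊗[A] M ⧸ D.cotangentImage I) :=
  liftQuotient
    (((D.cotangentImage I).mkQ.restrictScalars A ∘ₗ TensorProduct.mk A (A ⧸ I) M 1).compDer D)
    fun x hx => (Submodule.Quotient.mk_eq_zero _).2 <|
      Submodule.subset_span ⟨I.toCotangent ⟨x, hx⟩, rfl⟩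

theorem quotientDerivation_mk (a : A) :
    D.quotientDerivation I (Ideal.Quotient.mk I a) = Submodule.Quotient.mk (1 ⊗ₜ D a) :=
  liftQuotient_mk _ _ a

theorem compAlgebraMap_quotientDerivation :
    (D.quotientDerivation I).compAlgebraMap A =
      ((D.cotangentImage I).mkQ.restrictScalars A ∘ₗ TensorProduct.mk A (A ⧸ I) M 1).compDer D :=
  rfl

theorem exists_comp_quotientDerivation {N : Type*} [AddCommGroup N] [Module A N] [Module R N]
    [Module (A ⧸ I) N] [IsScalarTower A (A ⧸ I) N] (D₀ : Derivation R (A ⧸ I) N) (φ : M →ₗ[A] N)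
    (hφ : ∀ a, φ (D a) = D₀ (Ideal.Quotient.mk I a)) :
    ∃ ψ : ((A ⧸ I) ⊗[A] M ⧸ D.cotangentImage I) →ₗ[A ⧸ I] N,
      ∀ b, ψ (D.quotientDerivation I b) = D₀ b := by
  have hker : D.cotangentImage I ≤ LinearMap.ker (φ.liftBaseChange (A ⧸ I)) := by
    refine Submodule.span_le.2 ?_
    rintro _ ⟨c, rfl⟩
    obtain ⟨x, rfl⟩ := I.toCotangent_surjective c
    simp [hφ, Ideal.Quotient.eq_zero_iff_mem.2 x.2]
  refine ⟨(D.cotangentImage I).liftQ _ hker, fun b => ?_⟩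
  obtain ⟨a, rfl⟩ := Ideal.Quotient.mk_surjective b
  simp [quotientDerivation_mk, hφ]

end Derivation

theorem quotient_baseChange_hom_ext {A B M N : Type*} [CommRing A] [CommRing B] [Algebra A B]
    [AddCommGroup M] [Module A M] [AddCommGroup N] [Module A N] [Module B N]
    [IsScalarTower A B N]
    {P : Submodule B (B ⊗[A] M)} {ψ₁ ψ₂ : (B ⊗[A] M ⧸ P) →ₗ[B] N}
    (h : ψ₁.restrictScalars A ∘ₗ P.mkQ.restrictScalars A ∘ₗ TensorProduct.mk A B M 1 =
      ψ₂.restrictScalars A ∘ₗ P.mkQ.restrictScalars A ∘ₗ TensorProduct.mk A B M 1) :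
    ψ₁ = ψ₂ := by
  refine Submodule.linearMap_qext _ (TensorProduct.AlgebraTensorModule.ext fun b m => ?_)
  have hb : (b ⊗ₜ[A] m : B ⊗[A] M) = b • (1 ⊗ₜ m) := by rw [smul_tmul', smul_eq_mul, mul_one]
  simp only [LinearMap.coe_comp, Function.comp_apply, Submodule.mkQ_apply, hb,
    LinearMap.map_smul]
  exact congrArg (b • ·) (LinearMap.congr_fun h m)

namespace IsSpecial

variable {k : Type} [Field k] {n : ℕ} {A : Type} [CommRing A]
  [Algebra k A] [Algebra (MvPowerSeries (Fin n) k) A]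
  [IsScalarTower k (MvPowerSeries (Fin n) k) A]
  {M : Type} [AddCommGroup M] [Module k M] [Module A M] [IsScalarTower k A M]

theorem compDer {N : Type} [AddCommGroup N] [Module k N] [Module A N] [IsScalarTower k A N]
    {D : Derivation k A M} (hD : IsSpecial (n := n) D) (f : M →ₗ[A] N) :
    IsSpecial (n := n) (f.compDer D) := by
  intro g
  simp only [Derivation.coe_comp, LinearMap.coe_comp, LinearMap.coe_restrictScalars,
    Derivation.coeFn_coe, Function.comp_apply, hD g, map_sum, map_smul]

theorem compAlgebraMap_iff {B : Type} [CommRing B] [Algebra k B]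
    [Algebra (MvPowerSeries (Fin n) k) B] [IsScalarTower k (MvPowerSeries (Fin n) k) B]
    [Algebra A B] [IsScalarTower k A B] [IsScalarTower (MvPowerSeries (Fin n) k) A B]
    [Module B M] [IsScalarTower k B M] [IsScalarTower A B M] {D : Derivation k B M} :
    IsSpecial (n := n) (D.compAlgebraMap A) ↔ IsSpecial (n := n) D := by
  simp only [IsSpecial, Derivation.compAlgebraMap_apply, ← algebraMap_smul B,
    ← IsScalarTower.algebraMap_apply]

end IsSpecial

namespace SpecialDiff

variable {k : Type} [Field k] {n : ℕ} {A : Type} [CommRing A]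
  [Algebra k A] [Algebra (MvPowerSeries (Fin n) k) A]
  [IsScalarTower k (MvPowerSeries (Fin n) k) A]

theorem hom_ext (sd : SpecialDiff k n A) {M : Type} [AddCommGroup M] [Module k M] [Module A M]
    [IsScalarTower k A M] {f g : sd.Ω →ₗ[A] M} (h : ∀ a, f (sd.d a) = g (sd.d a)) : f = g :=
  (sd.universal M (f.compDer sd.d) (sd.special.compDer f)).unique (fun _ => rfl)
    fun a => (h a).symm

noncomputable def quotient (sd : SpecialDiff k n A) (I : Ideal A) : SpecialDiff k n (A ⧸ I) where
  Ω := (A ⧸ I) ⊗[A] sd.Ω ⧸ sd.d.cotangentImage I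
  d := sd.d.quotientDerivation I
  special := IsSpecial.compAlgebraMap_iff.1 <| by
    rw [Derivation.compAlgebraMap_quotientDerivation]
    exact sd.special.compDer _
  universal M _ _ _ _ D hD := by
    let _ : Module A M := Module.compHom M (algebraMap A (A ⧸ I))
    have : IsScalarTower A (A ⧸ I) M := IsScalarTower.of_algebraMap_smul fun _ _ => rfl
    have : IsScalarTower k A M := IsScalarTower.of_algebraMap_smul fun c m => by
      change algebraMap A (A ⧸ I) (algebraMap k A c) • m = c • m
      rw [← IsScalarTower.algebraMap_apply, algebraMap_smul]
    obtain ⟨φ, hφ, -⟩ :=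
      sd.universal M (D.compAlgebraMap A) (IsSpecial.compAlgebraMap_iff.2 hD)
    obtain ⟨ψ, hψ⟩ := sd.d.exists_comp_quotientDerivation I D φ hφ
    exact ⟨ψ, hψ, fun ψ' hψ' => quotient_baseChange_hom_ext <|
      sd.hom_ext fun a => (hψ' (Ideal.Quotient.mk I a)).trans (hψ _).symm⟩

end SpecialDiff

open TensorProduct in
theorem stmt_5_general (k : Type) [Field k] (n : ℕ) (A : Type) [CommRing A]
    [Algebra k A] [Algebra (MvPowerSeries (Fin n) k) A]
    [IsScalarTower k (MvPowerSeries (Fin n) k) A]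
    (sdA : SpecialDiff k n A) (I : Ideal A) :
    ∃ sdB : SpecialDiff k n (A ⧸ I),
      ∃ (δ : I.Cotangent →ₗ[A] ((A ⧸ I) ⊗[A] sdA.Ω))
        (u : ((A ⧸ I) ⊗[A] sdA.Ω) →ₗ[A ⧸ I] sdB.Ω),
        (∀ x : I, δ (I.toCotangent x) = (1 : A ⧸ I) ⊗ₜ[A] sdA.d (x : A)) ∧
        (∀ a : A, u ((1 : A ⧸ I) ⊗ₜ[A] sdA.d a) = sdB.d (Ideal.Quotient.mk I a)) ∧
        Function.Surjective u ∧
        (LinearMap.range δ : Set ((A ⧸ I) ⊗[A] sdA.Ω)) = (LinearMap.ker u : Set _) := by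
  refine ⟨sdA.quotient I, sdA.d.cotangentToTensor I, (sdA.d.cotangentImage I).mkQ,
    sdA.d.cotangentToTensor_toCotangent I, fun a => (sdA.d.quotientDerivation_mk I a).symm,
    Submodule.mkQ_surjective _, ?_⟩
  exact (sdA.d.coe_cotangentImage I).symm.trans
    (congrArg SetLike.coe (Submodule.ker_mkQ _).symm)

open TensorProduct in
/-- if `Ω'_{A/k}` exists and `B = A/I`, then `Ω'_{B/k}` exists and there is
an exact sequence `I/I² → Ω'_{A/k} ⊗_A B → Ω'_{B/k} → 0` with the natural maps. -/
theorem stmt_5 (k : Type) [Field k] [CharZero k] (n : ℕ) (A : Type) [CommRing A]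
    [Algebra k A] [Algebra (MvPowerSeries (Fin n) k) A]
    [IsScalarTower k (MvPowerSeries (Fin n) k) A]
    (sdA : SpecialDiff k n A) (I : Ideal A) :
    ∃ sdB : SpecialDiff k n (A ⧸ I),
      ∃ (δ : I.Cotangent →ₗ[A] ((A ⧸ I) ⊗[A] sdA.Ω))
        (u : ((A ⧸ I) ⊗[A] sdA.Ω) →ₗ[A ⧸ I] sdB.Ω),
        (∀ x : I, δ (I.toCotangent x) = (1 : A ⧸ I) ⊗ₜ[A] sdA.d (x : A)) ∧
        (∀ a : A, u ((1 : A ⧸ I) ⊗ₜ[A] sdA.d a) = sdB.d (Ideal.Quotient.mk I a)) ∧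
        Function.Surjective u ∧
        (LinearMap.range δ : Set ((A ⧸ I) ⊗[A] sdA.Ω)) = (LinearMap.ker u : Set _) :=
  stmt_5_general k n A sdA I
end
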